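/- arXiv:2508.06486 — 7 statements merged into one kernel-verified Lean document; each statement's English description precedes it below -/
import Mathlib

section
/- Let K = [diag(g_1)V, diag(g_2)V, ..., diag(g_b)V] ∈ ℝ^{k×k} where k = bt, V ∈ ℝ^{k×t} and g_1,...,g_b ∈ ℝ^k. For each j, let Q_j ∈ ℝ^{k×t} be a matrix with orthonormal columns whose range is the orthogonal complement of the span of the columns of all blocks diag(g_i)V with i ≠ j. Then σ_min(K) ≥ (1/√b) · min_{1≤j≤b} σ_min(Q_j^T diag(g_j) V). -/
/-!
Write `K x = ∑ⱼ diag(gⱼ) V xⱼ` for the blocks `xⱼ` of a unit vector `x`. Some block has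
`‖xⱼ‖² ≥ 1/b`. Since `Qⱼᵀ` annihilates every block `diag(gᵢ) V` with `i ≠ j` and, having
orthonormal columns, does not increase lengths,
`‖K x‖ ≥ ‖Qⱼᵀ K x‖ = ‖Qⱼᵀ diag(gⱼ) V xⱼ‖ ≥ σ_min(Qⱼᵀ diag(gⱼ) V) / √b`.
-/

open Matrix

/-- Euclidean norm of a vector. -/
noncomputable def enormEuc {n : Type*} [Fintype n] (x : n → ℝ) : ℝ :=
  Real.sqrt (∑ i, x i ^ 2)

/-- Smallest singular value of a matrix, as the infimum of `‖Mx‖` over unit vectors. -/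
noncomputable def sigMin {m n : Type*} [Fintype m] [Fintype n] (M : Matrix m n ℝ) : ℝ :=
  sInf {r | ∃ x : n → ℝ, enormEuc x = 1 ∧ r = enormEuc (M.mulVec x)}

section

variable {m n : Type*} [Fintype m] [Fintype n]

lemma enormEuc_eq_sqrt_dotProduct (x : n → ℝ) : enormEuc x = √(x ⬝ᵥ x) := by
  simp only [enormEuc, dotProduct, sq]

lemma dotProduct_self_nonneg_real (x : n → ℝ) : 0 ≤ x ⬝ᵥ x :=
  Fintype.sum_nonneg fun i => mul_self_nonneg (x i)

lemma enormEuc_nonneg (x : n → ℝ) : 0 ≤ enormEuc x :=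
  Real.sqrt_nonneg _

lemma enormEuc_smul (c : ℝ) (x : n → ℝ) : enormEuc (c • x) = |c| * enormEuc x := by
  rw [enormEuc_eq_sqrt_dotProduct, enormEuc_eq_sqrt_dotProduct, smul_dotProduct, dotProduct_smul,
    smul_smul, smul_eq_mul, ← sq, Real.sqrt_mul (sq_nonneg c), Real.sqrt_sq_eq_abs]

lemma enormEuc_single [DecidableEq n] (i : n) : enormEuc (Pi.single i (1 : ℝ)) = 1 := by
  rw [enormEuc_eq_sqrt_dotProduct, dotProduct_single, Pi.single_eq_same, mul_one, Real.sqrt_one]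

lemma enormEuc_transpose_mulVec_le {k : Type*} [Fintype k] [DecidableEq k] (Q : Matrix m k ℝ)
    (hQ : Qᵀ * Q = 1) (z : m → ℝ) : enormEuc (Qᵀ *ᵥ z) ≤ enormEuc z := by
  set w := Qᵀ *ᵥ z
  have hzQw : z ⬝ᵥ Q *ᵥ w = w ⬝ᵥ w := by rw [dotProduct_mulVec, ← mulVec_transpose]
  have hQw : Q *ᵥ w ⬝ᵥ Q *ᵥ w = w ⬝ᵥ w := by
    rw [dotProduct_mulVec, ← mulVec_transpose, mulVec_mulVec, hQ, one_mulVec]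
  have hres : (z - Q *ᵥ w) ⬝ᵥ (z - Q *ᵥ w) = z ⬝ᵥ z - w ⬝ᵥ w := by
    rw [sub_dotProduct, dotProduct_sub, dotProduct_sub, hzQw, dotProduct_comm (Q *ᵥ w), hzQw, hQw]
    ring
  rw [enormEuc_eq_sqrt_dotProduct, enormEuc_eq_sqrt_dotProduct]
  have := dotProduct_self_nonneg_real (z - Q *ᵥ w)
  exact Real.sqrt_le_sqrt (by linarith)

lemma sigMin_nonneg (M : Matrix m n ℝ) : 0 ≤ sigMin M :=
  Real.sInf_nonneg (by rintro r ⟨x, -, rfl⟩; exact enormEuc_nonneg _)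

lemma sigMin_of_isEmpty [IsEmpty n] (M : Matrix m n ℝ) : sigMin M = 0 := by
  rw [sigMin]
  convert Real.sInf_empty
  refine Set.eq_empty_of_forall_notMem ?_
  rintro r ⟨x, hx, -⟩
  simp [enormEuc] at hx

lemma sigMin_le (M : Matrix m n ℝ) {x : n → ℝ} (hx : enormEuc x = 1) :
    sigMin M ≤ enormEuc (M *ᵥ x) :=
  csInf_le ⟨0, by rintro r ⟨y, -, rfl⟩; exact enormEuc_nonneg _⟩ ⟨x, hx, rfl⟩

lemma le_sigMin [Nonempty n] (M : Matrix m n ℝ) {c : ℝ}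
    (h : ∀ x, enormEuc x = 1 → c ≤ enormEuc (M *ᵥ x)) : c ≤ sigMin M := by
  classical
  inhabit n
  exact le_csInf ⟨_, Pi.single default 1, enormEuc_single _, rfl⟩ <| by
    rintro r ⟨x, hx, rfl⟩
    exact h x hx

lemma sigMin_mul_enormEuc_le (M : Matrix m n ℝ) (y : n → ℝ) :
    sigMin M * enormEuc y ≤ enormEuc (M *ᵥ y) := by
  rcases (enormEuc_nonneg y).eq_or_lt with hy | hy
  · rw [← hy, mul_zero]
    exact enormEuc_nonneg _
  have hunit : enormEuc ((enormEuc y)⁻¹ • y) = 1 := by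
    rw [enormEuc_smul, abs_inv, abs_of_pos hy, inv_mul_cancel₀ hy.ne']
  have h := sigMin_le M hunit
  rw [mulVec_smul, enormEuc_smul, abs_inv, abs_of_pos hy, le_inv_mul_iff₀ hy] at h
  linarith

end

section Blocks

variable {m ι τ : Type*} [Fintype ι] [Fintype τ]

lemma exists_enormEuc_div_sqrt_card_le_curry [Nonempty ι] (x : ι × τ → ℝ) :
    ∃ j, enormEuc x / √(Fintype.card ι) ≤ enormEuc (Function.curry x j) := by
  have hsum : ∑ _j : ι, x ⬝ᵥ x / Fintype.card ι ≤
      ∑ j, Function.curry x j ⬝ᵥ Function.curry x j := by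
    rw [Finset.sum_const, Finset.card_univ, nsmul_eq_mul, mul_div_cancel₀ _ (by positivity)]
    simp only [dotProduct, Fintype.sum_prod_type, Function.curry_apply, le_refl]
  obtain ⟨j, -, hj⟩ := Finset.exists_le_of_sum_le Finset.univ_nonempty hsum
  refine ⟨j, ?_⟩
  rw [enormEuc_eq_sqrt_dotProduct, enormEuc_eq_sqrt_dotProduct,
    ← Real.sqrt_div' _ (Nat.cast_nonneg _)]
  exact Real.sqrt_le_sqrt hj

lemma mulVec_eq_sum_curry (B : ι → Matrix m τ ℝ) (x : ι × τ → ℝ) :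
    (of fun r p => B p.1 r p.2) *ᵥ x = ∑ i, B i *ᵥ Function.curry x i := by
  ext r
  simp only [mulVec, dotProduct, Finset.sum_apply, Fintype.sum_prod_type, of_apply,
    Function.curry_apply]

lemma transpose_mulVec_blocks_mulVec {k : Type*} [Fintype m] [DecidableEq ι]
    (B : ι → Matrix m τ ℝ) (Q : Matrix m k ℝ) {j : ι} (hperp : ∀ i, i ≠ j → Qᵀ * B i = 0)
    (x : ι × τ → ℝ) :
    Qᵀ *ᵥ ((of fun r p => B p.1 r p.2) *ᵥ x) = (Qᵀ * B j) *ᵥ Function.curry x j := by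
  rw [mulVec_eq_sum_curry, mulVec_sum, Finset.sum_eq_single j _ (by simp)]
  · rw [mulVec_mulVec]
  · intro i _ hij
    rw [mulVec_mulVec, hperp i hij, zero_mulVec]

theorem inv_sqrt_card_mul_inf'_sigMin_le_sigMin_blocks {k : Type*} [Fintype m] [Fintype k]
    [DecidableEq k] (B : ι → Matrix m τ ℝ) (Q : ι → Matrix m k ℝ)
    (hQ : ∀ j, (Q j)ᵀ * Q j = 1) (hperp : ∀ i j, i ≠ j → (Q j)ᵀ * B i = 0)
    (hne : (Finset.univ : Finset ι).Nonempty) :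
    1 / √(Fintype.card ι) * Finset.univ.inf' hne (fun j => sigMin ((Q j)ᵀ * B j)) ≤
      sigMin (of fun r p => B p.1 r p.2 : Matrix m (ι × τ) ℝ) := by
  classical
  have : Nonempty ι := Finset.univ_nonempty_iff.mp hne
  cases isEmpty_or_nonempty τ
  · simp only [sigMin_of_isEmpty, Finset.inf'_const, mul_zero, le_refl]
  refine le_sigMin _ fun x hx => ?_
  obtain ⟨j, hj⟩ := exists_enormEuc_div_sqrt_card_le_curry x
  rw [hx] at hj
  calc 1 / √(Fintype.card ι) * Finset.univ.inf' hne (fun j => sigMin ((Q j)ᵀ * B j))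
      ≤ sigMin ((Q j)ᵀ * B j) * (1 / √(Fintype.card ι)) := by
        rw [mul_comm]
        gcongr
        exact Finset.inf'_le _ (Finset.mem_univ j)
    _ ≤ sigMin ((Q j)ᵀ * B j) * enormEuc (Function.curry x j) := by
        gcongr
        exact sigMin_nonneg _
    _ ≤ enormEuc (((Q j)ᵀ * B j) *ᵥ Function.curry x j) := sigMin_mul_enormEuc_le _ _
    _ = enormEuc ((Q j)ᵀ *ᵥ ((of fun r p => B p.1 r p.2) *ᵥ x)) := by
        rw [transpose_mulVec_blocks_mulVec B (Q j) (fun i hij => hperp i j hij)]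
    _ ≤ enormEuc ((of fun r p => B p.1 r p.2) *ᵥ x) := enormEuc_transpose_mulVec_le _ (hQ j) _

end Blocks

theorem stmt3_general (b t : ℕ) (V : Matrix (Fin (b * t)) (Fin t) ℝ)
    (g : Fin b → Fin (b * t) → ℝ)
    (Q : Fin b → Matrix (Fin (b * t)) (Fin t) ℝ)
    (hQorth : ∀ j, (Q j)ᵀ * Q j = 1)
    (hQperp : ∀ i j, i ≠ j → (Q j)ᵀ * (Matrix.diagonal (g i) * V) = 0)
    (hne : (Finset.univ : Finset (Fin b)).Nonempty)
    (K : Matrix (Fin (b * t)) (Fin b × Fin t) ℝ)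
    (hK : ∀ i p, K i p = g p.1 i * V i p.2) :
    (1 / Real.sqrt b) *
        Finset.univ.inf' hne (fun j => sigMin ((Q j)ᵀ * (Matrix.diagonal (g j) * V))) ≤
      sigMin K := by
  have hKblocks : K = of fun r p => (diagonal (g p.1) * V) r p.2 := by
    ext r p
    rw [hK, of_apply, diagonal_mul]
  rw [hKblocks]
  simpa only [Fintype.card_fin] using
    inv_sqrt_card_mul_inf'_sigMin_le_sigMin_blocks (fun j => diagonal (g j) * V) Q hQorth hQperp hne

/-- Peng–Vempala reduction: breaking a block Krylov matrix into pieces,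
`σ_min(K) ≥ (1/√b) · min_j σ_min(Q_jᵀ diag(g_j) V)`, where for each `j` the
matrix `Q_j` has orthonormal columns spanning the orthogonal complement of the
columns of all blocks `diag(g_i) V`, `i ≠ j`. -/
theorem stmt3 (b t : ℕ) (hb : 0 < b) (V : Matrix (Fin (b * t)) (Fin t) ℝ)
    (g : Fin b → Fin (b * t) → ℝ)
    (Q : Fin b → Matrix (Fin (b * t)) (Fin t) ℝ)
    (hQorth : ∀ j, (Q j)ᵀ * Q j = 1)
    (hQperp : ∀ i j, i ≠ j → (Q j)ᵀ * (Matrix.diagonal (g i) * V) = 0)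
    (hQspan : ∀ j (v : Fin (b * t) → ℝ),
      (∀ i, i ≠ j → ∀ s : Fin t, ∑ r, v r * (Matrix.diagonal (g i) * V) r s = 0) →
      ∃ c : Fin t → ℝ, v = (Q j).mulVec c)
    (hne : (Finset.univ : Finset (Fin b)).Nonempty)
    (K : Matrix (Fin (b * t)) (Fin b × Fin t) ℝ)
    (hK : ∀ i p, K i p = g p.1 i * V i p.2) :
    (1 / Real.sqrt b) *
        Finset.univ.inf' hne (fun j => sigMin ((Q j)ᵀ * (Matrix.diagonal (g j) * V))) ≤
      sigMin K :=
  stmt3_general b t V g Q hQorth hQperp hne K hK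
end

section
/- Let Q ∈ ℝ^{k×t} have orthonormal columns and suppose Γ ∈ ℝ^{k×m} satisfies: (1) Γ^T Q = 0; (2) ‖Γ‖_2 ≤ M; (3) ‖Γ^T u‖_2 ≥ η‖u‖_2 for every s-sparse vector u ∈ ℝ^k, where 0 < η ≤ M. Then for every unit vector x ∈ ℝ^t, the vector Qx has at least s+1 entries of magnitude at least η/(3M√k). -/
/-!
A unit vector `v = Qx` lies in the kernel of `Γᵀ`. Split it as `v = a + b`, where `a` keeps the
entries of magnitude at least `τ = η/(3M√k)` and `b` the others, so that `‖b‖ ≤ √k τ = η/(3M)`.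
If `a` were `s`-sparse, the RIP bound and `Γᵀa = -Γᵀb` would give `η‖a‖ ≤ M‖b‖ ≤ η/3`, hence
`‖a‖, ‖b‖ ≤ 1/3`, contradicting `‖a‖² + ‖b‖² = ‖v‖² = 1`.
-/

open Matrix

/-- Euclidean norm of a vector. -/
noncomputable def enorm2 {n : Type*} [Fintype n] (x : n → ℝ) : ℝ :=
  Real.sqrt (∑ i, x i ^ 2)

open Finset

section Enorm2

variable {ι : Type*} [Fintype ι]

lemma enorm2_nonneg (x : ι → ℝ) : 0 ≤ enorm2 x :=
  Real.sqrt_nonneg _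

lemma enorm2_sq (x : ι → ℝ) : enorm2 x ^ 2 = ∑ i, x i ^ 2 :=
  Real.sq_sqrt (sum_nonneg fun _ _ => sq_nonneg _)

lemma enorm2_sq_eq_dotProduct (x : ι → ℝ) : enorm2 x ^ 2 = x ⬝ᵥ x := by
  rw [enorm2_sq]
  simp only [dotProduct, sq]

lemma enorm2_neg (x : ι → ℝ) : enorm2 (-x) = enorm2 x := by
  simp only [enorm2, Pi.neg_apply, neg_sq]

lemma dotProduct_le_enorm2_mul_enorm2 (x y : ι → ℝ) : x ⬝ᵥ y ≤ enorm2 x * enorm2 y :=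
  Real.sum_mul_le_sqrt_mul_sqrt _ x y

lemma enorm2_le_sqrt_card_mul {x : ι → ℝ} {c : ℝ} (hc : 0 ≤ c) (hx : ∀ i, |x i| ≤ c) :
    enorm2 x ≤ Real.sqrt (Fintype.card ι) * c := by
  have hsum : ∑ i, x i ^ 2 ≤ Fintype.card ι * c ^ 2 := by
    calc ∑ i, x i ^ 2 ≤ ∑ _i : ι, c ^ 2 :=
          sum_le_sum fun i _ => sq_le_sq' (abs_le.mp (hx i)).1 (abs_le.mp (hx i)).2
      _ = Fintype.card ι * c ^ 2 := by simp
  calc enorm2 x ≤ Real.sqrt (Fintype.card ι * c ^ 2) := Real.sqrt_le_sqrt hsum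
    _ = Real.sqrt (Fintype.card ι) * c := by
      rw [Real.sqrt_mul (Nat.cast_nonneg _), Real.sqrt_sq hc]

lemma enorm2_add_sq_of_mul_eq_zero {a b : ι → ℝ} (hab : ∀ i, a i * b i = 0) :
    enorm2 (a + b) ^ 2 = enorm2 a ^ 2 + enorm2 b ^ 2 := by
  simp only [enorm2_sq, ← sum_add_distrib, Pi.add_apply]
  refine sum_congr rfl fun i _ => ?_
  linear_combination 2 * hab i

end Enorm2

section Matrix

variable {ι κ : Type*} [Fintype ι] [Fintype κ]

lemma enorm2_transpose_mulVec_le {A : Matrix ι κ ℝ} {M : ℝ} (hM : 0 ≤ M)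
    (hA : ∀ w, enorm2 (A *ᵥ w) ≤ M * enorm2 w) (u : ι → ℝ) :
    enorm2 (Aᵀ *ᵥ u) ≤ M * enorm2 u := by
  set w := Aᵀ *ᵥ u
  have hw : enorm2 w ^ 2 ≤ enorm2 u * (M * enorm2 w) :=
    calc enorm2 w ^ 2 = u ⬝ᵥ A *ᵥ w := by
          rw [enorm2_sq_eq_dotProduct, dotProduct_mulVec u, ← mulVec_transpose]
      _ ≤ enorm2 u * enorm2 (A *ᵥ w) := dotProduct_le_enorm2_mul_enorm2 _ _
      _ ≤ enorm2 u * (M * enorm2 w) := mul_le_mul_of_nonneg_left (hA w) (enorm2_nonneg u)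
  rcases (enorm2_nonneg w).eq_or_lt with h0 | hpos
  · rw [← h0]
    exact mul_nonneg hM (enorm2_nonneg u)
  · nlinarith

lemma enorm2_mulVec_of_transpose_mul_self [DecidableEq κ] {Q : Matrix ι κ ℝ} (hQ : Qᵀ * Q = 1)
    (x : κ → ℝ) : enorm2 (Q *ᵥ x) = enorm2 x := by
  have hsq : enorm2 (Q *ᵥ x) ^ 2 = enorm2 x ^ 2 := by
    rw [enorm2_sq_eq_dotProduct, enorm2_sq_eq_dotProduct, dotProduct_mulVec,
      ← mulVec_transpose, mulVec_mulVec, hQ, one_mulVec]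
  exact (pow_left_inj₀ (enorm2_nonneg _) (enorm2_nonneg _) two_ne_zero).mp hsq

end Matrix

section LargeEntries

variable {ι : Type*}

noncomputable def largeEntries (τ : ℝ) (v : ι → ℝ) (i : ι) : ℝ :=
  if τ ≤ |v i| then v i else 0

lemma card_largeEntries_ne_zero_le [Fintype ι] (τ : ℝ) (v : ι → ℝ) :
    #{i | largeEntries τ v i ≠ 0} ≤ #{i | τ ≤ |v i|} := by
  refine card_le_card fun i hi => ?_
  simp only [mem_filter_univ, largeEntries] at hi ⊢
  by_contra h
  simp [h] at hi

lemma abs_sub_largeEntries_le {τ : ℝ} (hτ : 0 ≤ τ) (v : ι → ℝ) (i : ι) :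
    |(v - largeEntries τ v) i| ≤ τ := by
  simp only [largeEntries, Pi.sub_apply]
  split_ifs with h
  · simpa using hτ
  · simpa using (not_le.mp h).le

lemma largeEntries_mul_sub_largeEntries (τ : ℝ) (v : ι → ℝ) (i : ι) :
    largeEntries τ v i * (v - largeEntries τ v) i = 0 := by
  simp only [largeEntries, Pi.sub_apply]
  split_ifs <;> ring

end LargeEntries

variable {ι κ : Type*} [Fintype ι] [Fintype κ]

lemma mul_enorm2_le_of_mulVec_add_eq_zero {B : Matrix κ ι ℝ} {s : ℕ} {η M : ℝ}
    (hnorm : ∀ u, enorm2 (B *ᵥ u) ≤ M * enorm2 u)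
    (hrip : ∀ u : ι → ℝ, #{i | u i ≠ 0} ≤ s → η * enorm2 u ≤ enorm2 (B *ᵥ u))
    {a b : ι → ℝ} (hab : B *ᵥ (a + b) = 0) (ha : #{i | a i ≠ 0} ≤ s) :
    η * enorm2 a ≤ M * enorm2 b :=
  calc η * enorm2 a ≤ enorm2 (B *ᵥ a) := hrip a ha
    _ = enorm2 (B *ᵥ b) := by
      rw [mulVec_add, add_eq_zero_iff_eq_neg] at hab
      rw [hab, enorm2_neg]
    _ ≤ M * enorm2 b := hnorm b

theorem le_card_abs_ge_of_mulVec_eq_zero {B : Matrix κ ι ℝ} {s : ℕ} {η M : ℝ} (hη : 0 < η)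
    (hηM : η ≤ M) (hnorm : ∀ u, enorm2 (B *ᵥ u) ≤ M * enorm2 u)
    (hrip : ∀ u : ι → ℝ, #{i | u i ≠ 0} ≤ s → η * enorm2 u ≤ enorm2 (B *ᵥ u))
    {v : ι → ℝ} (hBv : B *ᵥ v = 0) (hv : enorm2 v = 1) :
    s + 1 ≤ #{i | η / (3 * M * Real.sqrt (Fintype.card ι)) ≤ |v i|} := by
  have hM : 0 < M := hη.trans_le hηM
  set τ := η / (3 * M * Real.sqrt (Fintype.card ι))
  by_contra! hcard
  have hτ : 0 ≤ τ := by positivity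
  set a := largeEntries τ v
  set b := v - a
  have ha_sparse : #{i | a i ≠ 0} ≤ s :=
    (card_largeEntries_ne_zero_le τ v).trans (Nat.le_of_lt_succ hcard)
  have hb_small : enorm2 b ≤ η / (3 * M) :=
    calc enorm2 b ≤ Real.sqrt (Fintype.card ι) * τ :=
          enorm2_le_sqrt_card_mul hτ (abs_sub_largeEntries_le hτ v)
      _ ≤ η / (3 * M) := by
        rcases (Real.sqrt_nonneg (Fintype.card ι)).eq_or_lt with h0 | hpos
        · rw [← h0, zero_mul]; positivity
        · exact le_of_eq (by simp only [τ]; field_simp)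
  have ha_small : η * enorm2 a ≤ η * (1 / 3) :=
    calc η * enorm2 a ≤ M * enorm2 b :=
          mul_enorm2_le_of_mulVec_add_eq_zero hnorm hrip (by rwa [add_sub_cancel]) ha_sparse
      _ ≤ M * (η / (3 * M)) := mul_le_mul_of_nonneg_left hb_small hM.le
      _ = η * (1 / 3) := by field_simp
  have hpyth : enorm2 a ^ 2 + enorm2 b ^ 2 = 1 := by
    rw [← enorm2_add_sq_of_mul_eq_zero (largeEntries_mul_sub_largeEntries τ v), add_sub_cancel,
      hv, one_pow]
  have hb_third : enorm2 b ≤ 1 / 3 :=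
    hb_small.trans ((div_le_div_iff₀ (by positivity) (by norm_num)).mpr (by linarith))
  have ha_third : enorm2 a ≤ 1 / 3 := le_of_mul_le_mul_left ha_small hη
  nlinarith [enorm2_nonneg a, enorm2_nonneg b]

/-- Non-sparsification certificates certify non-sparsification: if `Γ` satisfies
orthogonality `ΓᵀQ = 0`, the spectral norm bound `‖Γ‖₂ ≤ M`, and the injective RIP
`‖Γᵀu‖ ≥ η‖u‖` for all `s`-sparse `u`, then for every unit vector `x`, the
vector `Qx` has at least `s+1` entries of magnitude at least `η/(3M√k)`. -/
theorem stmt4 (k t m s : ℕ) (η M : ℝ) (hη : 0 < η) (hηM : η ≤ M)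
    (Q : Matrix (Fin k) (Fin t) ℝ) (hQ : Qᵀ * Q = 1)
    (Γ : Matrix (Fin k) (Fin m) ℝ)
    (horth : Γᵀ * Q = 0)
    (hnorm : ∀ w : Fin m → ℝ, enorm2 (Γ.mulVec w) ≤ M * enorm2 w)
    (hrip : ∀ u : Fin k → ℝ,
      (Finset.univ.filter fun i => u i ≠ 0).card ≤ s →
      η * enorm2 u ≤ enorm2 (Γᵀ.mulVec u))
    (x : Fin t → ℝ) (hx : enorm2 x = 1) :
    s + 1 ≤ (Finset.univ.filter fun i =>
      η / (3 * M * Real.sqrt k) ≤ |Q.mulVec x i|).card := by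
  have hΓt := enorm2_transpose_mulVec_le (hη.trans_le hηM).le hnorm
  have hker : Γᵀ *ᵥ (Q *ᵥ x) = 0 := by rw [mulVec_mulVec, horth, zero_mulVec]
  have hunit : enorm2 (Q *ᵥ x) = 1 := by rw [enorm2_mulVec_of_transpose_mul_self hQ, hx]
  simpa using le_card_abs_ge_of_mulVec_eq_zero hη hηM hΓt hrip hker hunit
end

section
/- Let V ∈ ℝ^{k×t} be the Vandermonde matrix with nodes 1 = λ_1 > λ_2 > ... > λ_k ≥ 0 (V_{ij} = λ_i^{j-1}), with t ≤ k. Define η = min_i (λ_i − λ_{i+1}). Then for any nonzero vector y ∈ ℝ^t, the vector Vy has at least k − (t−1) entries of magnitude at least ‖y‖_∞ · (η/6)^{2(t−1)}. -/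
open Polynomial

-- coefficient bound for monic products of linear factors with roots in [-1,1]
lemma aux_coeff_prod {ι : Type*} [DecidableEq ι] (s : Finset ι) (a : ι → ℝ)
    (ha : ∀ j ∈ s, |a j| ≤ 1) (n : ℕ) :
    |(∏ j ∈ s, (X - C (a j))).coeff n| ≤ 2 ^ s.card := by
  induction s using Finset.induction_on generalizing n with
  | empty =>
    simp only [Finset.prod_empty, Polynomial.coeff_one, Finset.card_empty, pow_zero]
    split <;> simp
  | @insert b s' hj ih =>
    have hb : |a b| ≤ 1 := ha b (Finset.mem_insert_self _ _)
    have ha' : ∀ j ∈ s', |a j| ≤ 1 := fun j hjs => ha j (Finset.mem_insert_of_mem hjs)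
    rw [Finset.prod_insert hj, Finset.card_insert_of_notMem hj]
    have h1 : ((X - C (a b)) * ∏ j ∈ s', (X - C (a j))).coeff n =
        (X * ∏ j ∈ s', (X - C (a j))).coeff n - a b * (∏ j ∈ s', (X - C (a j))).coeff n := by
      rw [sub_mul, Polynomial.coeff_sub, Polynomial.coeff_C_mul]
    rw [h1]
    have h2 : |(X * ∏ j ∈ s', (X - C (a j))).coeff n| ≤ 2 ^ s'.card := by
      cases n with
      | zero => simp [Polynomial.mul_coeff_zero]
      | succ m =>
        rw [Polynomial.coeff_X_mul]
        exact ih ha' m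
    have h3 := ih ha' n
    calc |(X * ∏ j ∈ s', (X - C (a j))).coeff n - a b * (∏ j ∈ s', (X - C (a j))).coeff n|
        ≤ |(X * ∏ j ∈ s', (X - C (a j))).coeff n| + |a b| * |(∏ j ∈ s', (X - C (a j))).coeff n| := by
          rw [← abs_mul]; exact abs_sub _ _
      _ ≤ 2 ^ s'.card + 1 * 2 ^ s'.card := by
          gcongr
      _ = 2 ^ (s'.card + 1) := by ring

/-- Vandermonde non-sparsification: for the `k × t` Vandermonde matrix `V` on nodes
`1 = λ₁ > λ₂ > ⋯ > λ_k ≥ 0` with minimum consecutive gap `η`, and any nonzero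
`y ∈ ℝᵗ`, the vector `Vy` has at least `k - (t-1)` entries of magnitude at least
`‖y‖_∞ · (η/6)^{2(t-1)}`. -/
theorem stmt5 (k t : ℕ) (ht : 1 ≤ t) (htk : t ≤ k) (lam : Fin k → ℝ)
    (h1 : lam ⟨0, by omega⟩ = 1) (hanti : StrictAnti lam) (hnn : ∀ i, 0 ≤ lam i)
    (η : ℝ) (hη : 0 < η)
    (hgap : ∀ i j : Fin k, (j : ℕ) = (i : ℕ) + 1 → η ≤ lam i - lam j)
    (y : Fin t → ℝ) (hy : y ≠ 0)
    (hne : (Finset.univ : Finset (Fin t)).Nonempty) :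
    k - (t - 1) ≤ (Finset.univ.filter fun i : Fin k =>
      (Finset.univ.sup' hne fun j => |y j|) * (η / 6) ^ (2 * (t - 1)) ≤
        |∑ j : Fin t, lam i ^ (j : ℕ) * y j|).card := by
  have hk : 0 < k := lt_of_lt_of_le ht htk
  have hMpos : 0 < (Finset.univ : Finset (Fin t)).sup' hne fun j => |y j| := by
    obtain ⟨j, hj⟩ := Function.ne_iff.mp hy
    have hle : |y j| ≤ (Finset.univ : Finset (Fin t)).sup' hne fun j => |y j| :=
      Finset.le_sup' (fun j => |y j|) (Finset.mem_univ j)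
    have h2 : 0 < |y j| := abs_pos.mpr hj
    linarith
  have hle1 : ∀ i : Fin k, lam i ≤ 1 := by
    intro i
    rw [← h1]
    exact hanti.antitone (Fin.mk_le_of_le_val (Nat.zero_le _))
  have hsep : ∀ a b : Fin k, a ≠ b → η ≤ |lam a - lam b| := by
    have key : ∀ a b : Fin k, a < b → η ≤ lam a - lam b := by
      intro a b hab
      have hak : (a : ℕ) + 1 < k := by
        have := b.isLt
        have : (a : ℕ) < (b : ℕ) := hab
        omega
      have h2 : η ≤ lam a - lam ⟨(a:ℕ)+1, hak⟩ := hgap a ⟨(a:ℕ)+1, hak⟩ rfl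
      have h3 : lam b ≤ lam ⟨(a:ℕ)+1, hak⟩ := hanti.antitone (by
        have : (a : ℕ) < (b : ℕ) := hab
        simp only [Fin.le_def]
        omega)
      linarith
    intro a b hab
    rcases lt_or_gt_of_ne hab with h | h
    · rw [abs_of_nonneg (by linarith [key a b h])]; exact key a b h
    · rw [abs_of_nonpos (by linarith [key b a h])]; linarith [key b a h]
  rcases eq_or_lt_of_le ht with ht1 | ht2
  · -- t = 1 case
    have ht1' : t = 1 := ht1.symm
    subst ht1'
    have heq : (Finset.univ.filter fun i : Fin k =>
        (Finset.univ.sup' hne fun j => |y j|) * (η / 6) ^ (2 * (1 - 1)) ≤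
          |∑ j : Fin 1, lam i ^ (j : ℕ) * y j|) = Finset.univ := by
      apply Finset.filter_true_of_mem
      intro i _
      have hs : ∑ j : Fin 1, lam i ^ (j : ℕ) * y j = y 0 := by simp
      have hsup : (Finset.univ.sup' hne fun j : Fin 1 => |y j|) = |y 0| := by
        apply le_antisymm
        · exact Finset.sup'_le _ _ fun j _ => by rw [Subsingleton.elim j 0]
        · exact Finset.le_sup' (fun j : Fin 1 => |y j|) (Finset.mem_univ (0 : Fin 1))
      rw [hs, hsup]
      simp
    rw [heq, Finset.card_univ, Fintype.card_fin]
    omega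
  · -- t ≥ 2 case
    have hη1 : η ≤ 1 := by
      have hk2 : 1 < k := lt_of_lt_of_le ht2 htk
      have hg := hgap ⟨0, by omega⟩ ⟨1, hk2⟩ rfl
      have h0 := hnn ⟨1, hk2⟩
      rw [h1] at hg
      linarith
    set M : ℝ := (Finset.univ : Finset (Fin t)).sup' hne fun j => |y j| with hMdef
    set m := t - 1 with hm
    have hm1 : 1 ≤ m := by omega
    have htm : t = m + 1 := by omega
    set c : ℝ := M * (η / 6) ^ (2 * m) with hc
    have hcpos : 0 < c := mul_pos hMpos (by positivity)
    have hcard : (Finset.univ.filter fun i : Fin k =>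
          c ≤ |∑ j : Fin t, lam i ^ (j : ℕ) * y j|).card
        + (Finset.univ.filter fun i : Fin k =>
          ¬ (c ≤ |∑ j : Fin t, lam i ^ (j : ℕ) * y j|)).card = k := by
      rw [Finset.card_filter_add_card_filter_not]
      simp
    suffices hb : (Finset.univ.filter fun i : Fin k =>
        ¬ (c ≤ |∑ j : Fin t, lam i ^ (j : ℕ) * y j|)).card ≤ m by omega
    by_contra hcon
    rw [not_le] at hcon
    have hcon' : t ≤ (Finset.univ.filter fun i : Fin k =>
        ¬ (c ≤ |∑ j : Fin t, lam i ^ (j : ℕ) * y j|)).card := by omega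
    obtain ⟨S, hSsub, hScard⟩ := Finset.exists_subset_card_eq hcon'
    set P : Polynomial ℝ := ∑ j : Fin t, Polynomial.C (y j) * Polynomial.X ^ (j : ℕ) with hP
    have hinj : Set.InjOn lam S := (hanti.injective).injOn
    have hcoeff : ∀ j0 : Fin t, P.coeff (j0 : ℕ) = y j0 := by
      intro j0
      rw [hP, Polynomial.finset_sum_coeff]
      simp only [Polynomial.coeff_C_mul, Polynomial.coeff_X_pow]
      rw [Finset.sum_eq_single j0]
      · simp
      · intro j _ hjne
        simp [Fin.val_eq_val, (Ne.symm hjne : j0 ≠ j)]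
      · simp
    have hdeg : P.degree < (S.card : ℕ) := by
      rw [hScard, Polynomial.degree_lt_iff_coeff_zero]
      intro n hn
      have hn' : t ≤ n := by exact_mod_cast hn
      rw [hP, Polynomial.finset_sum_coeff]
      apply Finset.sum_eq_zero
      intro j _
      have hjn : (j : ℕ) ≠ n := by have := j.isLt; omega
      rw [Polynomial.coeff_C_mul, Polynomial.coeff_X_pow, if_neg (Ne.symm hjn), mul_zero]
    have heval : ∀ i : Fin k, P.eval (lam i) = ∑ j : Fin t, lam i ^ (j : ℕ) * y j := by
      intro i
      rw [hP, Polynomial.eval_finset_sum]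
      refine Finset.sum_congr rfl fun j _ => ?_
      rw [Polynomial.eval_mul, Polynomial.eval_C, Polynomial.eval_pow, Polynomial.eval_X]
      ring
    have hPinterp : P = Lagrange.interpolate S lam (fun i => P.eval (lam i)) :=
      Lagrange.eq_interpolate hinj hdeg
    have hbasis : ∀ i ∈ S, ∀ n : ℕ,
        |(Lagrange.basis S lam i).coeff n| ≤ 2 ^ m / η ^ m := by
      intro i hi n
      have hcarde : (S.erase i).card = m := by
        rw [Finset.card_erase_of_mem hi, hScard]
      rw [Lagrange.basis]
      have hfact : (∏ j ∈ S.erase i, Lagrange.basisDivisor (lam i) (lam j)) =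
          Polynomial.C (∏ j ∈ S.erase i, (lam i - lam j)⁻¹) *
            ∏ j ∈ S.erase i, (Polynomial.X - Polynomial.C (lam j)) := by
        simp only [Lagrange.basisDivisor]
        rw [Finset.prod_mul_distrib, map_prod]
      rw [hfact, Polynomial.coeff_C_mul, abs_mul]
      have hA : |∏ j ∈ S.erase i, (lam i - lam j)⁻¹| ≤ (η ^ m)⁻¹ := by
        rw [Finset.abs_prod]
        have hstep : ∀ j ∈ S.erase i, |(lam i - lam j)⁻¹| ≤ η⁻¹ := by
          intro j hj
          rw [abs_inv]
          exact inv_anti₀ hη (hsep i j fun h => (Finset.mem_erase.mp hj).1 h.symm)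
        calc ∏ j ∈ S.erase i, |(lam i - lam j)⁻¹| ≤ ∏ _j ∈ S.erase i, η⁻¹ :=
              Finset.prod_le_prod (fun j _ => abs_nonneg _) hstep
          _ = (η ^ m)⁻¹ := by rw [Finset.prod_const, hcarde, ← inv_pow]
      have hB : |(∏ j ∈ S.erase i, (Polynomial.X - Polynomial.C (lam j))).coeff n| ≤ 2 ^ m := by
        have haux := aux_coeff_prod (S.erase i) (fun j => lam j)
          (fun j _ => abs_le.mpr ⟨by linarith [hnn j], hle1 j⟩) n
        rwa [hcarde] at haux
      calc |∏ j ∈ S.erase i, (lam i - lam j)⁻¹| *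
            |(∏ j ∈ S.erase i, (Polynomial.X - Polynomial.C (lam j))).coeff n|
          ≤ (η ^ m)⁻¹ * 2 ^ m := mul_le_mul hA hB (abs_nonneg _) (by positivity)
        _ = 2 ^ m / η ^ m := by rw [div_eq_mul_inv, mul_comm]
    have hsmall : ∀ i ∈ S, |P.eval (lam i)| ≤ c := by
      intro i hi
      have hmem := hSsub hi
      rw [Finset.mem_filter] at hmem
      rw [heval i]
      linarith [not_le.mp hmem.2]
    obtain ⟨j0, _, hj0⟩ := Finset.exists_mem_eq_sup' hne fun j => |y j|
    have hMbound : M ≤ t * (c * (2 ^ m / η ^ m)) := by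
      have h0 : M = |P.coeff (j0 : ℕ)| := by rw [hcoeff j0]; exact hj0
      rw [h0, hPinterp, Lagrange.interpolate_apply, Polynomial.finset_sum_coeff]
      simp only [Polynomial.coeff_C_mul]
      calc |∑ i ∈ S, P.eval (lam i) * (Lagrange.basis S lam i).coeff (j0 : ℕ)|
          ≤ ∑ i ∈ S, |P.eval (lam i) * (Lagrange.basis S lam i).coeff (j0 : ℕ)| :=
            Finset.abs_sum_le_sum_abs _ _
        _ ≤ ∑ _i ∈ S, c * (2 ^ m / η ^ m) := by
            refine Finset.sum_le_sum fun i hi => ?_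
            rw [abs_mul]
            exact mul_le_mul (hsmall i hi) (hbasis i hi _) (abs_nonneg _) (le_of_lt hcpos)
        _ = t * (c * (2 ^ m / η ^ m)) := by
            rw [Finset.sum_const, hScard, nsmul_eq_mul]
    have hmain : (t : ℝ) * (c * (2 ^ m / η ^ m)) < M := by
      rw [hc]
      have e1 : (η / 6) ^ (2 * m) * ((2:ℝ) ^ m / η ^ m) = (η / 18) ^ m := by
        rw [pow_mul, ← div_pow, ← mul_pow]
        congr 1
        field_simp
        ring
      have e2 : (t:ℝ) * (M * (η / 6) ^ (2 * m) * (2 ^ m / η ^ m)) =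
          M * ((t:ℝ) * (η / 18) ^ m) := by
        rw [mul_assoc M, e1]; ring
      rw [e2]
      nth_rewrite 2 [← mul_one M]
      apply mul_lt_mul_of_pos_left _ hMpos
      have h18 : (t : ℝ) < 18 ^ m := by
        have hb := one_add_mul_le_pow (by norm_num : (-2:ℝ) ≤ 17) m
        have hb' : 1 + (m:ℝ) * 17 ≤ 18 ^ m := by norm_num at hb ⊢; linarith
        have hmr : (1:ℝ) ≤ (m:ℝ) := by exact_mod_cast hm1
        have htr : (t:ℝ) = (m:ℝ) + 1 := by exact_mod_cast htm
        nlinarith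
      calc (t:ℝ) * (η / 18) ^ m ≤ (t:ℝ) * ((1:ℝ) / 18) ^ m := by
            apply mul_le_mul_of_nonneg_left _ (by positivity)
            exact pow_le_pow_left₀ (by positivity) (by linarith) m
        _ = (t:ℝ) / 18 ^ m := by rw [div_pow, one_pow, mul_one_div]
        _ < 1 := by rw [div_lt_one (by positivity)]; exact h18
    linarith
end

section
/- Let C ∈ ℝ^{k×k} be symmetric with k distinct eigenvalues, let b and t be such that k = bt. Then there exists a matrix H ∈ ℝ^{k×b} such that the block Krylov matrix [H, CH, C²H, ..., C^{t-1}H] ∈ ℝ^{k×k} is invertible. Consequently, the polynomial H ↦ det([H, CH, ..., C^{t-1}H]) in the entries of H is a nonzero polynomial. -/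
/-!
Diagonalise `C = Q D Q⁻¹` with `D = diag(μ)` and take `H = Q E`, where `E` is the `0/1` matrix
whose column `r` picks out the rows `i ≡ r (mod b)`. Then `[H, CH, …] = Q [E, DE, …]`, and the
entry `(i, j)` of `[E, DE, …]` is `μ i ^ (j / b)` if `i ≡ j (mod b)` and `0` otherwise. Grouping
indices by their residue mod `b` makes it block diagonal with `b` Vandermonde blocks, one for
each residue class of eigenvalues; these are invertible since the eigenvalues are distinct.
-/

open Matrix Function

namespace Matrix

variable {n R : Type*} [Fintype n] [DecidableEq n] [CommRing R]

/-- The block Krylov matrix `[H, CH, C²H, …]`, truncated to `m` columns. -/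
def blockKrylov {b : ℕ} (hb : 0 < b) (m : ℕ) (C : Matrix n n R) (H : Matrix n (Fin b) R) :
    Matrix n (Fin m) R :=
  of fun i j => (C ^ ((j : ℕ) / b) * H) i ⟨(j : ℕ) % b, Nat.mod_lt _ hb⟩

theorem blockKrylov_mul_left {b : ℕ} (hb : 0 < b) (m : ℕ) {C D Q : Matrix n n R}
    (hCQ : C * Q = Q * D) (H : Matrix n (Fin b) R) :
    blockKrylov hb m C (Q * H) = Q * blockKrylov hb m D H := by
  have hpow (p : ℕ) : C ^ p * Q = Q * D ^ p := (SemiconjBy.pow_right hCQ.symm p).symm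
  ext i j
  simp only [blockKrylov, of_apply, ← Matrix.mul_assoc, hpow]
  rw [Matrix.mul_assoc, mul_apply, mul_apply]
  rfl

def modSelector (k b : ℕ) : Matrix (Fin k) (Fin b) R :=
  of fun i r => if (i : ℕ) % b = r then 1 else 0

theorem blockKrylov_diagonal_modSelector {k b t : ℕ} (hb : 0 < b) (e : Fin k ≃ Fin t × Fin b)
    (hdiv : ∀ j, ((e j).1 : ℕ) = j / b) (hmod : ∀ j, ((e j).2 : ℕ) = j % b) (μ : Fin k → R) :
    blockKrylov hb k (diagonal μ) (modSelector k b) =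
      reindex e.symm e.symm (blockDiagonal fun r => vandermonde fun s => μ (e.symm (s, r))) := by
  ext i j
  simp only [reindex_apply, submatrix_apply, Equiv.symm_symm, blockDiagonal_apply,
    vandermonde_apply, Prod.mk.eta, Equiv.symm_apply_apply, blockKrylov, of_apply, diagonal_pow,
    diagonal_mul, modSelector, Fin.ext_iff, hmod, hdiv, Pi.pow_apply, mul_ite, mul_one, mul_zero]

theorem det_blockKrylov_diagonal_modSelector_ne_zero [IsDomain R] {k b t : ℕ} (hb : 0 < b)
    (hk : k = t * b) {μ : Fin k → R} (hμ : Injective μ) :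
    (blockKrylov hb k (diagonal μ) (modSelector k b)).det ≠ 0 := by
  rw [blockKrylov_diagonal_modSelector hb ((finCongr hk).trans finProdFinEquiv.symm)
    (fun _ => rfl) (fun _ => rfl), det_reindex_self, det_blockDiagonal,
    Finset.prod_ne_zero_iff]
  intro r _
  refine det_vandermonde_ne_zero_iff.mpr fun s₁ s₂ h => ?_
  exact congrArg Prod.fst (Equiv.injective _ (hμ h))

theorem exists_isUnit_det_blockKrylov {K : Type*} [Field K] {k b t : ℕ} (hb : 0 < b)
    (hk : k = t * b) {C Q : Matrix (Fin k) (Fin k) K} {μ : Fin k → K} (hQ : IsUnit Q)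
    (hCQ : C * Q = Q * diagonal μ) (hμ : Injective μ) :
    ∃ H : Matrix (Fin k) (Fin b) K, IsUnit (blockKrylov hb k C H).det := by
  refine ⟨Q * (modSelector k b : Matrix (Fin k) (Fin b) K), ?_⟩
  rw [blockKrylov_mul_left hb k hCQ, det_mul]
  exact ((isUnit_iff_isUnit_det Q).mp hQ).mul
    (det_blockKrylov_diagonal_modSelector_ne_zero hb hk hμ).isUnit

theorem IsHermitian.mul_eigenvectorUnitary {𝕜 : Type*} [RCLike 𝕜] {A : Matrix n n 𝕜}
    (hA : A.IsHermitian) :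
    A * (hA.eigenvectorUnitary : Matrix n n 𝕜) =
      (hA.eigenvectorUnitary : Matrix n n 𝕜) * diagonal (RCLike.ofReal ∘ hA.eigenvalues) := by
  have hU := Unitary.mul_star_self_of_mem hA.eigenvectorUnitary.prop
  set U : Matrix n n 𝕜 := (hA.eigenvectorUnitary : Matrix n n 𝕜)
  calc A * U = U * (star U * A * U) := by
        rw [← Matrix.mul_assoc, ← Matrix.mul_assoc, hU, Matrix.one_mul]
    _ = U * diagonal (RCLike.ofReal ∘ hA.eigenvalues) := by
        rw [← hA.conjStarAlgAut_star_eigenvectorUnitary, Unitary.conjStarAlgAut_star_apply]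

end Matrix

theorem stmt8_general (k b t : ℕ) (hb : 0 < b) (hk : k = b * t)
    (C : Matrix (Fin k) (Fin k) ℝ) (hC : C.IsHermitian)
    (hdist : Function.Injective hC.eigenvalues) :
    ∃ H : Matrix (Fin k) (Fin b) ℝ,
      IsUnit (Matrix.det (Matrix.of fun i j : Fin k =>
        ((C ^ ((j : ℕ) / b)) * H) i ⟨(j : ℕ) % b, Nat.mod_lt _ hb⟩)) :=
  exists_isUnit_det_blockKrylov hb (hk.trans (mul_comm b t))
    (Unitary.isUnit_coe (U := hC.eigenvectorUnitary)) hC.mul_eigenvectorUnitary (RCLike.ofReal_injective.comp hdist)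

/-- For a real symmetric `k×k` matrix `C` with distinct eigenvalues and `k = bt`,
there exists a starting block `H ∈ ℝ^{k×b}` making the block Krylov matrix
`[H, CH, ..., C^{t-1}H]` invertible (hence the determinant, a polynomial in the
entries of `H`, is a nonzero polynomial). The `j`-th column of the block Krylov
matrix is column `j % b` of `C^(j / b) * H`. -/
theorem stmt8 (k b t : ℕ) (hb : 0 < b) (ht : 0 < t) (hk : k = b * t)
    (C : Matrix (Fin k) (Fin k) ℝ) (hC : C.IsHermitian)
    (hdist : Function.Injective hC.eigenvalues) :
    ∃ H : Matrix (Fin k) (Fin b) ℝ,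
      IsUnit (Matrix.det (Matrix.of fun i j : Fin k =>
        ((C ^ ((j : ℕ) / b)) * H) i ⟨(j : ℕ) % b, Nat.mod_lt _ hb⟩)) :=
  stmt8_general k b t hb hk C hC hdist
end

section
/- Let C ∈ ℝ^{k×k} be symmetric with k distinct eigenvalues and k = bt. If H ∈ ℝ^{k×b} has entries that are i.i.d. standard Gaussian (or more generally absolutely continuous with respect to Lebesgue measure), then the block Krylov matrix [H, CH, ..., C^{t-1}H] is invertible with probability one. -/
open MeasureTheory


lemma aux_fin_mvpoly_null : ∀ (n : ℕ) (P : MvPolynomial (Fin n) ℝ), P ≠ 0 →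
    volume {x : Fin n → ℝ | MvPolynomial.eval x P = 0} = 0 := by
  intro n
  induction n with
  | zero =>
    intro P hP
    obtain ⟨c, rfl⟩ := MvPolynomial.C_surjective (Fin 0) P
    have hc : c ≠ 0 := fun h => hP (by simp [h])
    convert measure_empty
    · ext x; simp [hc]
    · infer_instance
  | succ n ih =>
    intro P hP
    set Q := MvPolynomial.finSuccEquiv ℝ n P with hQdef
    have hQ : Q ≠ 0 := by
      intro h
      exact hP ((MvPolynomial.finSuccEquiv ℝ n).injective (by simp [← hQdef, h]))
    set g := Q.leadingCoeff with hgdef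
    have hg : g ≠ 0 := Polynomial.leadingCoeff_ne_zero.mpr hQ
    -- the measurable equiv
    set e := MeasurableEquiv.piFinSuccAbove (fun _ : Fin (n+1) => ℝ) 0 with hedef
    have he : MeasurePreserving e.symm volume volume :=
      (volume_preserving_piFinSuccAbove (fun _ : Fin (n+1) => ℝ) 0).symm e
    have hScont : Continuous fun x : Fin (n+1) → ℝ => MvPolynomial.eval x P :=
      MvPolynomial.continuous_eval P
    have hS : MeasurableSet {x : Fin (n+1) → ℝ | MvPolynomial.eval x P = 0} :=
      hScont.measurable (measurableSet_singleton 0)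
    rw [← he.measure_preimage hS.nullMeasurableSet]
    have hpre : e.symm ⁻¹' {x : Fin (n+1) → ℝ | MvPolynomial.eval x P = 0}
        = {p : ℝ × (Fin n → ℝ) | MvPolynomial.eval (Fin.cons p.1 p.2) P = 0} := by
      ext ⟨a, y⟩
      simp only [Set.mem_preimage, Set.mem_setOf_eq, hedef,
        MeasurableEquiv.piFinSuccAbove_symm_apply, Fin.insertNthEquiv_zero,
        Fin.consEquiv_apply]
      rfl
    rw [hpre]
    have hT : MeasurableSet {p : ℝ × (Fin n → ℝ) | MvPolynomial.eval (Fin.cons p.1 p.2) P = 0} := by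
      have : Continuous fun p : ℝ × (Fin n → ℝ) => MvPolynomial.eval (Fin.cons p.1 p.2) P := by
        apply hScont.comp
        apply continuous_pi
        intro i
        refine Fin.cases ?_ ?_ i
        · exact continuous_fst
        · exact fun j => (continuous_apply j).comp continuous_snd
      exact this.measurable (measurableSet_singleton 0)
    have : (volume : Measure (ℝ × (Fin n → ℝ))) = (volume : Measure ℝ).prod volume := rfl
    rw [this, Measure.prod_apply_symm hT]
    have hsec : ∀ y : Fin n → ℝ, MvPolynomial.eval y g ≠ 0 →
        volume ((fun x : ℝ => (x, y)) ⁻¹' {p : ℝ × (Fin n → ℝ) |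
          MvPolynomial.eval (Fin.cons p.1 p.2) P = 0}) = 0 := by
      intro y hy
      have hq : Polynomial.map (MvPolynomial.eval y) Q ≠ 0 := by
        intro h
        apply hy
        have h2 := congrArg (fun p => Polynomial.coeff p Q.natDegree) h
        simp only [Polynomial.coeff_map, Polynomial.coeff_zero] at h2
        rw [hgdef, Polynomial.leadingCoeff]
        exact h2
      have hfin : Set.Finite {a : ℝ | Polynomial.eval a (Polynomial.map (MvPolynomial.eval y) Q) = 0} :=
        Polynomial.finite_setOf_isRoot hq
      apply measure_mono_null _ (hfin.measure_zero volume)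
      intro a ha
      simp only [Set.mem_preimage, Set.mem_setOf_eq] at ha ⊢
      rwa [MvPolynomial.eval_eq_eval_mv_eval'] at ha
    have hNull : volume {y : Fin n → ℝ | MvPolynomial.eval y g = 0} = 0 := ih g hg
    have : (fun y : Fin n → ℝ => volume ((fun x : ℝ => (x, y)) ⁻¹' {p : ℝ × (Fin n → ℝ) |
          MvPolynomial.eval (Fin.cons p.1 p.2) P = 0})) =ᵐ[volume] 0 := by
      rw [Filter.eventuallyEq_iff_exists_mem]
      refine ⟨{y | MvPolynomial.eval y g = 0}ᶜ, ?_, fun y hy => hsec y hy⟩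
      rw [mem_ae_iff, compl_compl]
      exact hNull
    rw [lintegral_congr_ae this]
    simp

lemma aux_prod_mvpoly_null (k b : ℕ) (P : MvPolynomial (Fin k × Fin b) ℝ) (hP : P ≠ 0) :
    volume {x : Fin k × Fin b → ℝ | MvPolynomial.eval x P = 0} = 0 := by
  have hcont : Continuous fun x : Fin k × Fin b → ℝ => MvPolynomial.eval x P :=
    MvPolynomial.continuous_eval P
  have hS : MeasurableSet {x : Fin k × Fin b → ℝ | MvPolynomial.eval x P = 0} :=
    hcont.measurable (measurableSet_singleton 0)
  set e : Fin (k * b) ≃ Fin k × Fin b := finProdFinEquiv.symm with hedef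
  have hmp : MeasurePreserving
      (MeasurableEquiv.arrowCongr' e (MeasurableEquiv.refl ℝ)) volume volume :=
    volume_preserving_arrowCongr' e (MeasurableEquiv.refl ℝ) (MeasurePreserving.id _)
  rw [← hmp.measure_preimage hS.nullMeasurableSet]
  have hpre : (MeasurableEquiv.arrowCongr' e (MeasurableEquiv.refl ℝ)) ⁻¹'
      {x : Fin k × Fin b → ℝ | MvPolynomial.eval x P = 0}
      = {g : Fin (k * b) → ℝ | MvPolynomial.eval g (MvPolynomial.rename e.symm P) = 0} := by
    ext g
    simp only [Set.mem_preimage, Set.mem_setOf_eq, MvPolynomial.eval_rename]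
    have : (MeasurableEquiv.arrowCongr' e (MeasurableEquiv.refl ℝ)) g = g ∘ e.symm := rfl
    rw [this]
  rw [hpre]
  refine aux_fin_mvpoly_null _ _ (fun h => hP ?_)
  have := MvPolynomial.rename_injective (R := ℝ) (e.symm : Fin k × Fin b → Fin (k*b))
      e.symm.injective
  apply this
  rw [h, map_zero]

lemma aux_curry_mp (k b : ℕ) :
    MeasurePreserving (fun H : Fin k → Fin b → ℝ => fun p : Fin k × Fin b => H p.1 p.2)
      volume volume := by
  have hmeas : Measurable (fun H : Fin k → Fin b → ℝ => fun p : Fin k × Fin b => H p.1 p.2) :=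
    measurable_pi_lambda _ fun p => (measurable_pi_apply p.2).comp (measurable_pi_apply p.1)
  refine ⟨hmeas, ?_⟩
  refine (Measure.pi_eq fun s hs => ?_).symm
  rw [Measure.map_apply hmeas (MeasurableSet.univ_pi fun p => hs p)]
  have hpre : (fun H : Fin k → Fin b → ℝ => fun p : Fin k × Fin b => H p.1 p.2) ⁻¹'
      Set.univ.pi s = Set.univ.pi fun i => Set.univ.pi fun j => s (i, j) := by
    ext H
    simp [Set.mem_pi, Prod.forall]
  rw [hpre]
  rw [show (volume : Measure (Fin k → Fin b → ℝ)) = Measure.pi (fun _ => volume) from rfl]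
  rw [Measure.pi_pi]
  have : ∀ i, (volume : Measure (Fin b → ℝ)) (Set.univ.pi fun j => s (i, j))
      = ∏ j, volume (s (i, j)) := fun i => Measure.pi_pi _ _
  simp_rw [this]
  rw [Fintype.prod_prod_type]

section AlgPart
open Matrix

lemma aux_exists_good (k b t : ℕ) (hb : 0 < b) (ht : 0 < t) (hk : k = b * t)
    (C : Matrix (Fin k) (Fin k) ℝ) (hC : C.IsHermitian)
    (hdist : Function.Injective hC.eigenvalues) :
    ∃ H : Fin k → Fin b → ℝ,
      Matrix.det (Matrix.of fun i j : Fin k =>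
        ((C ^ ((j : ℕ) / b)) * Matrix.of H) i ⟨(j : ℕ) % b, Nat.mod_lt _ hb⟩) ≠ 0 := by
  classical
  set U : Matrix (Fin k) (Fin k) ℝ := (hC.eigenvectorUnitary : Matrix (Fin k) (Fin k) ℝ)
    with hUdef
  set ev : Fin k → ℝ := hC.eigenvalues with hevdef
  set D : Matrix (Fin k) (Fin k) ℝ := diagonal ev with hDdef
  have hspec : C = U * D * star U := by
    have := hC.spectral_theorem
    rwa [RCLike.ofReal_real_eq_id, Function.id_comp] at this
  have hU1 : U * star U = 1 := (Matrix.mem_unitaryGroup_iff).mp hC.eigenvectorUnitary.2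
  have hU1' : star U * U = 1 := (Matrix.mem_unitaryGroup_iff').mp hC.eigenvectorUnitary.2
  have hCU : C * U = U * D := by
    rw [hspec, mul_assoc, mul_assoc, hU1', mul_one]
  have hCUm : ∀ m : ℕ, C ^ m * U = U * D ^ m := by
    intro m
    induction m with
    | zero => simp
    | succ m ih =>
      rw [pow_succ, pow_succ, mul_assoc, hCU, ← mul_assoc, ih, mul_assoc]
  set E : Matrix (Fin k) (Fin b) ℝ :=
    Matrix.of fun (l : Fin k) (c : Fin b) => if (l : ℕ) % b = (c : ℕ) then (1:ℝ) else 0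
    with hEdef
  set V : Matrix (Fin k) (Fin k) ℝ :=
    Matrix.of fun (l j : Fin k) =>
      ev l ^ ((j : ℕ) / b) * E l ⟨(j : ℕ) % b, Nat.mod_lt _ hb⟩ with hVdef
  refine ⟨fun i j => (U * E) i j, ?_⟩
  have hofH : Matrix.of (fun i j => (U * E) i j) = U * E := rfl
  have hM : (Matrix.of fun i j : Fin k =>
        ((C ^ ((j : ℕ) / b)) * Matrix.of (fun i j => (U * E) i j)) i
          ⟨(j : ℕ) % b, Nat.mod_lt _ hb⟩) = U * V := by
    ext i j
    rw [Matrix.of_apply, hofH, ← Matrix.mul_assoc, hCUm, Matrix.mul_assoc]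
    rw [Matrix.mul_apply, Matrix.mul_apply]
    apply Finset.sum_congr rfl
    intro l _
    congr 1
    rw [hVdef, Matrix.of_apply, hDdef, Matrix.diagonal_pow, Matrix.diagonal_mul, Pi.pow_apply]
  rw [hM, Matrix.det_mul]
  have hdetU : U.det ≠ 0 := by
    have := congrArg Matrix.det hU1
    rw [Matrix.det_mul, Matrix.det_one] at this
    exact left_ne_zero_of_mul_eq_one this
  refine mul_ne_zero hdetU ?_
  -- block diagonal structure
  set φ : Fin t × Fin b ≃ Fin k := finProdFinEquiv.trans (finCongr (by rw [hk, Nat.mul_comm]))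
    with hφdef
  have hφval : ∀ (s : Fin t) (r : Fin b), (φ (s, r) : ℕ) = (r : ℕ) + b * (s : ℕ) := by
    intro s r; rfl
  have hsub : V.submatrix φ φ = Matrix.blockDiagonal
      (fun r : Fin b => Matrix.vandermonde fun s : Fin t => ev (φ (s, r))) := by
    ext ⟨s, r⟩ ⟨s', r'⟩
    rw [Matrix.submatrix_apply, hVdef, Matrix.of_apply, Matrix.blockDiagonal_apply]
    have hdiv : (φ (s', r') : ℕ) / b = (s' : ℕ) := by
      rw [hφval, Nat.add_mul_div_left _ _ hb, Nat.div_eq_of_lt r'.2, Nat.zero_add]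
    have hmod : (φ (s', r') : ℕ) % b = (r' : ℕ) := by
      rw [hφval, Nat.add_mul_mod_self_left, Nat.mod_eq_of_lt r'.2]
    have hmod2 : (φ (s, r) : ℕ) % b = (r : ℕ) := by
      rw [hφval, Nat.add_mul_mod_self_left, Nat.mod_eq_of_lt r.2]
    rw [hdiv, hEdef, Matrix.of_apply]
    simp only [hmod2, hmod]
    by_cases h : r = r'
    · subst h
      simp [Matrix.vandermonde]
    · have : ((r : ℕ) = ((⟨(φ (s', r') : ℕ) % b, Nat.mod_lt _ hb⟩ : Fin b) : ℕ)) ↔ False := by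
        simp only [hmod]
        exact iff_false_intro (fun hc => h (Fin.ext hc))
      rw [if_neg (by simpa [hmod] using fun hc => h (Fin.ext hc)), if_neg h, mul_zero]
  have hdetV : V.det ≠ 0 := by
    rw [← Matrix.det_submatrix_equiv_self φ V, hsub, Matrix.det_blockDiagonal]
    rw [Finset.prod_ne_zero_iff]
    intro r _
    rw [Matrix.det_vandermonde_ne_zero_iff]
    intro s s' h
    have := φ.injective (hdist h)
    exact (Prod.mk.injEq _ _ _ _ ▸ this).1
  exact hdetV

end AlgPart

/-- For a real symmetric `k×k` matrix `C` with distinct eigenvalues and `k = bt`,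
if the entries of the random starting block `H ∈ ℝ^{k×b}` have a joint distribution
absolutely continuous with respect to Lebesgue measure (e.g. i.i.d. standard
Gaussian), then the block Krylov matrix `[H, CH, ..., C^{t-1}H]` is invertible
with probability one. -/
theorem stmt9 (k b t : ℕ) (hb : 0 < b) (ht : 0 < t) (hk : k = b * t)
    (C : Matrix (Fin k) (Fin k) ℝ) (hC : C.IsHermitian)
    (hdist : Function.Injective hC.eigenvalues)
    (μ : MeasureTheory.Measure (Fin k → Fin b → ℝ))
    (hμ : μ ≪ MeasureTheory.volume) :
    μ {H | ¬ IsUnit (Matrix.det (Matrix.of fun i j : Fin k =>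
      ((C ^ ((j : ℕ) / b)) * Matrix.of H) i ⟨(j : ℕ) % b, Nat.mod_lt _ hb⟩))} = 0 := by
  classical
  set P : MvPolynomial (Fin k × Fin b) ℝ :=
    Matrix.det (Matrix.of fun i j : Fin k =>
      ∑ l : Fin k, MvPolynomial.C ((C ^ ((j : ℕ) / b)) i l) *
        MvPolynomial.X (l, (⟨(j : ℕ) % b, Nat.mod_lt _ hb⟩ : Fin b))) with hPdef
  have heval : ∀ H : Fin k → Fin b → ℝ,
      MvPolynomial.eval (fun p : Fin k × Fin b => H p.1 p.2) P =
      Matrix.det (Matrix.of fun i j : Fin k =>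
        ((C ^ ((j : ℕ) / b)) * Matrix.of H) i ⟨(j : ℕ) % b, Nat.mod_lt _ hb⟩) := by
    intro H
    rw [hPdef, RingHom.map_det]
    congr 1
    ext i j
    simp [Matrix.map_apply, Matrix.mul_apply]
  obtain ⟨H₀, hH₀⟩ := aux_exists_good k b t hb ht hk C hC hdist
  have hPne : P ≠ 0 := by
    intro h0
    apply hH₀
    rw [← heval H₀, h0, map_zero]
  have hZmeas : MeasurableSet {x : Fin k × Fin b → ℝ | MvPolynomial.eval x P = 0} :=
    (MvPolynomial.continuous_eval P).measurable (measurableSet_singleton 0)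
  have hset : {H : Fin k → Fin b → ℝ | ¬ IsUnit (Matrix.det (Matrix.of fun i j : Fin k =>
      ((C ^ ((j : ℕ) / b)) * Matrix.of H) i ⟨(j : ℕ) % b, Nat.mod_lt _ hb⟩))}
      = (fun H : Fin k → Fin b → ℝ => fun p : Fin k × Fin b => H p.1 p.2) ⁻¹'
        {x : Fin k × Fin b → ℝ | MvPolynomial.eval x P = 0} := by
    ext H
    simp only [Set.mem_setOf_eq, Set.mem_preimage, heval H, isUnit_iff_ne_zero, not_not]
  rw [hset]
  apply hμ
  rw [(aux_curry_mp k b).measure_preimage hZmeas.nullMeasurableSet]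
  exact aux_prod_mvpoly_null k b P hPne
end

section
/- Let A ∈ ℝ^{n×d} with top-k' left singular vectors U_{k'} and top-k left singular vectors U_k (k ≤ k'). If a matrix B ∈ ℝ^{n×ℓ} is (k',L)-good for A, then B is also (k,L)-good for A. Here B is (k,L)-good if there exists a matrix Q ∈ ℝ^{n×k} with orthonormal columns lying in range(B) such that U_k^T Q is invertible and ‖(U_k^T Q)^{-1}‖_2² ≤ L. -/
open Matrix

/-- Euclidean norm of a vector. -/
noncomputable def enorm {n : Type*} [Fintype n] (x : n → ℝ) : ℝ :=
  Real.sqrt (∑ i, x i ^ 2)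

/-- Largest singular value (spectral norm), as the supremum of `‖Mx‖` over unit vectors. -/
noncomputable def sigMax {m n : Type*} [Fintype m] [Fintype n] (M : Matrix m n ℝ) : ℝ :=
  sSup {r | ∃ x : n → ℝ, _root_.enorm x = 1 ∧ r = _root_.enorm (M.mulVec x)}

/-!
Let `Q'` witness `(k', L)`-goodness and `M = U_{k'}ᵀ Q'`. The first `k` columns `C` of `M⁻¹`
satisfy `U_kᵀ Q' C = 1`, so `C` is injective. Normalising `Q' C` by `R = √(Cᵀ C)` gives
`Q = Q' C R⁻¹` with orthonormal columns in `range(B)` and `U_kᵀ Q = R⁻¹`. Finally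
`‖R‖₂ = ‖C‖₂ ≤ ‖M⁻¹‖₂`, since `R` and `C` have the same Gram matrix and `C` is a restriction of `M⁻¹`
to a coordinate subspace.
-/

namespace Matrix

variable {m p q : Type*} [Fintype m] [Fintype p] [Fintype q]

lemma enorm_eq_sqrt_dotProduct (x : p → ℝ) : _root_.enorm x = √(x ⬝ᵥ x) := by
  simp only [_root_.enorm, dotProduct, sq]

lemma enorm_mulVec_eq_sqrt (P : Matrix m p ℝ) (x : p → ℝ) :
    _root_.enorm (P *ᵥ x) = √(x ⬝ᵥ (Pᵀ * P) *ᵥ x) := by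
  rw [enorm_eq_sqrt_dotProduct, ← mulVec_mulVec, dotProduct_mulVec x, vecMul_transpose]

lemma enorm_mulVec_of_transpose_mul_self_eq_one [DecidableEq p] {P : Matrix m p ℝ}
    (hP : Pᵀ * P = 1) (x : p → ℝ) : _root_.enorm (P *ᵥ x) = _root_.enorm x := by
  rw [enorm_mulVec_eq_sqrt, hP, one_mulVec, enorm_eq_sqrt_dotProduct]

lemma bddAbove_enorm_mulVec (N : Matrix m p ℝ) :
    BddAbove {r | ∃ x : p → ℝ, _root_.enorm x = 1 ∧ r = _root_.enorm (N *ᵥ x)} := by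
  refine ⟨√(∑ i, ∑ j, N i j ^ 2), ?_⟩
  rintro r ⟨x, hx, rfl⟩
  have hx : ∑ j, x j ^ 2 = 1 := Real.sqrt_eq_one.mp hx
  refine Real.sqrt_le_sqrt (Finset.sum_le_sum fun i _ => ?_)
  simpa [mulVec, dotProduct, hx] using Finset.sum_mul_sq_le_sq_mul_sq Finset.univ (N i) x

lemma enorm_mulVec_le_sigMax (N : Matrix m p ℝ) {x : p → ℝ} (hx : _root_.enorm x = 1) :
    _root_.enorm (N *ᵥ x) ≤ sigMax N :=
  le_csSup (bddAbove_enorm_mulVec N) ⟨x, hx, rfl⟩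

lemma sigMax_nonneg (N : Matrix m p ℝ) : 0 ≤ sigMax N :=
  Real.sSup_nonneg fun _ ⟨_, _, hr⟩ => hr ▸ Real.sqrt_nonneg _

lemma sigMax_eq_of_transpose_mul_self_eq {P : Matrix m p ℝ} {W : Matrix q p ℝ}
    (h : Pᵀ * P = Wᵀ * W) : sigMax P = sigMax W := by
  simp only [sigMax, enorm_mulVec_eq_sqrt, h]

lemma sigMax_mul_le_of_transpose_mul_self_eq_one [DecidableEq q] (N : Matrix m p ℝ)
    {E : Matrix p q ℝ} (hE : Eᵀ * E = 1) : sigMax (N * E) ≤ sigMax N := by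
  refine Real.sSup_le ?_ (sigMax_nonneg N)
  rintro r ⟨x, hx, rfl⟩
  rw [← mulVec_mulVec]
  exact enorm_mulVec_le_sigMax N (by rw [enorm_mulVec_of_transpose_mul_self_eq_one hE, hx])

omit [Fintype q] in
lemma transpose_mul_self_submatrix_one [DecidableEq p] [DecidableEq q] {f : q → p}
    (hf : Function.Injective f) :
    ((1 : Matrix p p ℝ).submatrix id f)ᵀ * (1 : Matrix p p ℝ).submatrix id f = 1 := by
  rw [transpose_submatrix, transpose_one, ← submatrix_mul _ _ _ _ _ Function.bijective_id,
    Matrix.one_mul, submatrix_one _ hf]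

open scoped MatrixOrder in
lemma exists_orthonormal_mul_inv [DecidableEq q] {C : Matrix p q ℝ}
    (hC : Function.Injective C.mulVec) :
    ∃ R : Matrix q q ℝ, IsUnit R.det ∧ (C * R⁻¹)ᵀ * (C * R⁻¹) = 1 ∧ Rᵀ * R = Cᵀ * C := by
  have hS : (Cᵀ * C).PosDef := by
    simpa [conjTranspose_eq_transpose_of_trivial] using PosDef.conjTranspose_mul_self C hC
  set R := CFC.sqrt (Cᵀ * C)
  have hRR : R * R = Cᵀ * C := CFC.sqrt_mul_sqrt_self _ hS.posSemidef.nonneg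
  have hRsymm : Rᵀ = R := by
    have := (nonneg_iff_posSemidef.mp (CFC.sqrt_nonneg (Cᵀ * C))).isHermitian
    rwa [IsHermitian, conjTranspose_eq_transpose_of_trivial] at this
  have hR : IsUnit R.det :=
    (isUnit_iff_isUnit_det R).mp ((CFC.isUnit_sqrt_iff _ hS.posSemidef.nonneg).mpr hS.isUnit)
  refine ⟨R, hR, ?_, by rw [hRsymm, hRR]⟩
  calc (C * R⁻¹)ᵀ * (C * R⁻¹) = R⁻¹ * (R * R) * R⁻¹ := by
        rw [hRR, transpose_mul, transpose_nonsing_inv, hRsymm]; simp only [Matrix.mul_assoc]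
    _ = 1 := by
        rw [Matrix.mul_assoc, Matrix.mul_assoc, mul_nonsing_inv _ hR, Matrix.mul_one,
          nonsing_inv_mul _ hR]

end Matrix

theorem stmt14_general (n k k' ℓ : ℕ) (hk : k ≤ k') (L : ℝ)
    (U' : Matrix (Fin n) (Fin k') ℝ)
    (B : Matrix (Fin n) (Fin ℓ) ℝ)
    (hgood : ∃ Q : Matrix (Fin n) (Fin k') ℝ,
      Qᵀ * Q = 1 ∧ (∃ C : Matrix (Fin ℓ) (Fin k') ℝ, Q = B * C) ∧
        IsUnit (U'ᵀ * Q).det ∧ sigMax ((U'ᵀ * Q)⁻¹) ^ 2 ≤ L) :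
    ∃ Q : Matrix (Fin n) (Fin k) ℝ,
      Qᵀ * Q = 1 ∧ (∃ C : Matrix (Fin ℓ) (Fin k) ℝ, Q = B * C) ∧
        IsUnit ((Matrix.of fun i (j : Fin k) => U' i (Fin.castLE hk j))ᵀ * Q).det ∧
        sigMax (((Matrix.of fun i (j : Fin k) => U' i (Fin.castLE hk j))ᵀ * Q)⁻¹) ^ 2 ≤ L := by
  obtain ⟨Q', hQ', ⟨C', rfl⟩, hM, hML⟩ := hgood
  set M := U'ᵀ * (B * C')
  set E := (1 : Matrix (Fin k') (Fin k') ℝ).submatrix id (Fin.castLE hk)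
  have hE : Eᵀ * E = 1 := transpose_mul_self_submatrix_one (Fin.castLE_injective hk)
  have hUk : (of fun i (j : Fin k) => U' i (Fin.castLE hk j)) = U' * E :=
    (mul_submatrix_one (Equiv.refl _) _ U').symm
  have hMC : Eᵀ * M * (M⁻¹ * E) = 1 := by
    rw [Matrix.mul_assoc, ← Matrix.mul_assoc M, mul_nonsing_inv _ hM, Matrix.one_mul, hE]
  have hC : Function.Injective (M⁻¹ * E).mulVec := fun x y hxy => by
    simpa [mulVec_mulVec, hMC] using congrArg (Eᵀ * M).mulVec hxy
  obtain ⟨R, hR, hCR, hRC⟩ := exists_orthonormal_mul_inv hC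
  have hUkQ : (U' * E)ᵀ * (B * C' * (M⁻¹ * E * R⁻¹)) = R⁻¹ := by
    calc (U' * E)ᵀ * (B * C' * (M⁻¹ * E * R⁻¹)) = Eᵀ * M * (M⁻¹ * E) * R⁻¹ := by
          simp only [M, transpose_mul, Matrix.mul_assoc]
      _ = R⁻¹ := by rw [hMC, Matrix.one_mul]
  refine ⟨B * C' * (M⁻¹ * E * R⁻¹), ?_, ⟨C' * (M⁻¹ * E * R⁻¹), Matrix.mul_assoc _ _ _⟩, ?_, ?_⟩
  · rw [transpose_mul, Matrix.mul_assoc, ← Matrix.mul_assoc (B * C')ᵀ, hQ', Matrix.one_mul, hCR]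
  · rw [hUk, hUkQ]
    exact isUnit_nonsing_inv_det _ hR
  · rw [hUk, hUkQ, nonsing_inv_nonsing_inv _ hR, sigMax_eq_of_transpose_mul_self_eq hRC]
    calc sigMax (M⁻¹ * E) ^ 2 ≤ sigMax M⁻¹ ^ 2 :=
          pow_le_pow_left₀ (sigMax_nonneg _) (sigMax_mul_le_of_transpose_mul_self_eq_one _ hE) 2
      _ ≤ L := hML

/-- Smaller rank is easier: if `B` is `(k',L)`-good (witnessed by some `Q` with
orthonormal columns in `range(B)` with `U_{k'}ᵀQ` invertible and
`‖(U_{k'}ᵀQ)⁻¹‖₂² ≤ L`), then `B` is `(k,L)`-good for any `k ≤ k'`, where `U_k`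
consists of the first `k` columns of `U_{k'}`. -/
theorem stmt14 (n k k' ℓ : ℕ) (hk : k ≤ k') (hkl : k' ≤ ℓ) (L : ℝ) (hL : 0 < L)
    (U' : Matrix (Fin n) (Fin k') ℝ) (hU' : U'ᵀ * U' = 1)
    (B : Matrix (Fin n) (Fin ℓ) ℝ)
    (hgood : ∃ Q : Matrix (Fin n) (Fin k') ℝ,
      Qᵀ * Q = 1 ∧ (∃ C : Matrix (Fin ℓ) (Fin k') ℝ, Q = B * C) ∧
        IsUnit (U'ᵀ * Q).det ∧ sigMax ((U'ᵀ * Q)⁻¹) ^ 2 ≤ L) :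
    ∃ Q : Matrix (Fin n) (Fin k) ℝ,
      Qᵀ * Q = 1 ∧ (∃ C : Matrix (Fin ℓ) (Fin k) ℝ, Q = B * C) ∧
        IsUnit ((Matrix.of fun i (j : Fin k) => U' i (Fin.castLE hk j))ᵀ * Q).det ∧
        sigMax (((Matrix.of fun i (j : Fin k) => U' i (Fin.castLE hk j))ᵀ * Q)⁻¹) ^ 2 ≤ L :=
  stmt14_general n k k' ℓ hk L U' B hgood
end

section
/- Let V ∈ ℝ^{k×t} be the Vandermonde matrix on distinct nodes λ_1 > ... > λ_k in [0,1] with t ≤ k, and let η = min_i(λ_i − λ_{i+1}). Let z ∈ ℝ^k be a t-sparse vector with ‖z‖_2 ≥ ρ > 0. Then ‖V^T z‖_2 ≥ (ρ/√k) · (η/2)^{t−1}. -/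
/-!
Pad the support of `z` to a set `s` of exactly `t` nodes. For `m ∈ s` let `p` be the Lagrange
basis polynomial of `s` at `λ_m`; it has degree `< t`, so pairing its coefficient vector with
`y = Vᵀz` gives `∑ᵢ p(λᵢ) zᵢ = z_m`, whence `|z_m| ≤ ‖coeff p‖₁ · ‖y‖₂`. This is Gautschi's bound
in disguise: by Mahler's inequality `|coeff_n p| ≤ C(d, n) M(p)` the coefficient `ℓ¹` norm is at
most `2^(t-1) M(p)`, and since all nodes lie in the unit disc the Mahler measure of `p` is
`∏_{j ≠ m} |λ_m - λ_j|⁻¹ ≤ η^(1-t)`. Summing `|z_m| ≤ (2/η)^(t-1) ‖y‖₂` over the `k`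
coordinates costs the factor `√k`.
-/

open Polynomial Finset

lemma abs_le_enorm {ι : Type*} [Fintype ι] (x : ι → ℝ) (i : ι) : |x i| ≤ _root_.enorm x := by
  rw [_root_.enorm, ← Real.sqrt_sq_eq_abs]
  exact Real.sqrt_le_sqrt (single_le_sum (fun j _ ↦ sq_nonneg (x j)) (mem_univ i))

lemma enorm_le_sqrt_card_mul {ι : Type*} [Fintype ι] {x : ι → ℝ} {c : ℝ} (hc : 0 ≤ c)
    (hx : ∀ i, |x i| ≤ c) : _root_.enorm x ≤ √(Fintype.card ι) * c := by
  rw [_root_.enorm, ← Real.sqrt_sq hc, ← Real.sqrt_mul (Nat.cast_nonneg _)]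
  refine Real.sqrt_le_sqrt ?_
  rw [← nsmul_eq_mul, ← card_univ, ← sum_const]
  exact sum_le_sum fun i _ ↦ sq_le_sq' (abs_le.mp (hx i)).1 (abs_le.mp (hx i)).2

namespace Polynomial

lemma mapMahlerMeasure_prod {A ι : Type*} [CommSemiring A] (v : A →+* ℂ) (s : Finset ι)
    (f : ι → A[X]) :
    (∏ i ∈ s, f i).mapMahlerMeasure v = ∏ i ∈ s, (f i).mapMahlerMeasure v := by
  induction s using Finset.cons_induction with
  | empty => simp
  | cons i s hi ih => rw [prod_cons, prod_cons, mapMahlerMeasure_mul, ih]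

section NormedRing

variable {A : Type*} [NormedRing A] (v : A →+* ℂ)

lemma mapMahlerMeasure_X_sub_C (hv : Isometry v) (a : A) :
    (X - C a).mapMahlerMeasure v = max 1 ‖a‖ := by
  rw [mapMahlerMeasure_eq, Polynomial.map_sub, map_X, map_C, mahlerMeasure_X_sub_C,
    hv.norm_map_of_map_zero (map_zero v)]

lemma sum_norm_coeff_le_two_pow_mul_mapMahlerMeasure (hv : Isometry v) (p : A[X]) :
    (p.sum fun _ a ↦ ‖a‖) ≤ 2 ^ p.natDegree * p.mapMahlerMeasure v := by
  rw [sum_over_range _ fun _ ↦ norm_zero]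
  calc ∑ n ∈ range (p.natDegree + 1), ‖p.coeff n‖
      ≤ ∑ n ∈ range (p.natDegree + 1), (p.natDegree.choose n : ℝ) * p.mapMahlerMeasure v :=
        sum_le_sum fun n _ ↦ norm_coeff_le_choose_mul_mapMahlerMeasure v hv n p
    _ = 2 ^ p.natDegree * p.mapMahlerMeasure v := by
        rw [← sum_mul, ← Nat.cast_sum, Nat.sum_range_choose, Nat.cast_pow, Nat.cast_ofNat]

end NormedRing

lemma sum_coeff_mul_sum_pow_mul {R ι : Type*} [CommSemiring R] [Fintype ι] {p : R[X]} {t : ℕ}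
    (hp : p.natDegree < t) (x z : ι → R) :
    ∑ j : Fin t, p.coeff j * ∑ i, x i ^ (j : ℕ) * z i = ∑ i, p.eval (x i) * z i := by
  simp only [mul_sum]
  rw [sum_comm]
  refine sum_congr rfl fun i _ ↦ ?_
  rw [eval_eq_sum_range' hp, sum_mul,
    ← Fin.sum_univ_eq_sum_range (fun j ↦ p.coeff j * x i ^ j * z i)]
  exact sum_congr rfl fun j _ ↦ by ring

end Polynomial

namespace Lagrange

lemma sum_eval_basis_mul {F ι : Type*} [Field F] [Fintype ι] [DecidableEq ι]
    {s : Finset ι} {x : ι → F} (hxs : Set.InjOn x s) {z : ι → F} (hz : ∀ i ∉ s, z i = 0)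
    {m : ι} (hm : m ∈ s) : ∑ i, (Lagrange.basis s x m).eval (x i) * z i = z m := by
  rw [sum_eq_single m _ (fun h ↦ (h (mem_univ m)).elim), eval_basis_self hxs hm, one_mul]
  intro i _ him
  by_cases hi : i ∈ s
  · rw [eval_basis_of_ne (Ne.symm him) hi, zero_mul]
  · rw [hz i hi, mul_zero]

lemma mapMahlerMeasure_basis {A ι : Type*} [NormedField A] [DecidableEq ι] (v : A →+* ℂ)
    (hv : Isometry v) (s : Finset ι) (x : ι → A) (i : ι) :
    (Lagrange.basis s x i).mapMahlerMeasure v =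
      ∏ j ∈ s.erase i, ‖x i - x j‖⁻¹ * max 1 ‖x j‖ := by
  rw [Lagrange.basis, mapMahlerMeasure_prod]
  refine prod_congr rfl fun j _ ↦ ?_
  rw [basisDivisor, mapMahlerMeasure_mul, mapMahlerMeasure_const v hv, norm_inv,
    mapMahlerMeasure_X_sub_C v hv]

variable {ι : Type*} [DecidableEq ι] {s : Finset ι} {x : ι → ℝ} {η : ℝ} {m : ι}

lemma injOn_of_le_abs_sub (hη : 0 < η) (hsep : ∀ i ∈ s, ∀ j ∈ s, i ≠ j → η ≤ |x i - x j|) :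
    Set.InjOn x s := fun i hi j hj hxij ↦ by
  by_contra hij
  have := hsep i hi j hj hij
  rw [hxij, sub_self, abs_zero] at this
  linarith

lemma mapMahlerMeasure_basis_le (hη : 0 < η) (hx : ∀ i ∈ s, |x i| ≤ 1)
    (hsep : ∀ i ∈ s, ∀ j ∈ s, i ≠ j → η ≤ |x i - x j|) (hm : m ∈ s) :
    (Lagrange.basis s x m).mapMahlerMeasure Complex.ofRealHom ≤ η⁻¹ ^ (#s - 1) := by
  rw [mapMahlerMeasure_basis _ Complex.isometry_ofReal, ← card_erase_of_mem hm, ← prod_const]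
  refine prod_le_prod (fun _ _ ↦ by positivity) fun j hj ↦ ?_
  obtain ⟨hjm, hjs⟩ := mem_erase.mp hj
  rw [Real.norm_eq_abs, Real.norm_eq_abs, max_eq_left (hx j hjs), mul_one]
  exact inv_anti₀ hη (hsep m hm j hjs hjm.symm)

lemma sum_norm_coeff_basis_le (hη : 0 < η) (hx : ∀ i ∈ s, |x i| ≤ 1)
    (hsep : ∀ i ∈ s, ∀ j ∈ s, i ≠ j → η ≤ |x i - x j|) (hm : m ∈ s) :
    ((Lagrange.basis s x m).sum fun _ a ↦ ‖a‖) ≤ (2 / η) ^ (#s - 1) := by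
  calc ((Lagrange.basis s x m).sum fun _ a ↦ ‖a‖)
      ≤ 2 ^ (#s - 1) * (Lagrange.basis s x m).mapMahlerMeasure Complex.ofRealHom := by
        rw [← natDegree_basis (injOn_of_le_abs_sub hη hsep) hm]
        exact sum_norm_coeff_le_two_pow_mul_mapMahlerMeasure _ Complex.isometry_ofReal _
    _ ≤ 2 ^ (#s - 1) * η⁻¹ ^ (#s - 1) := by
        gcongr; exact mapMahlerMeasure_basis_le hη hx hsep hm
    _ = (2 / η) ^ (#s - 1) := by rw [← mul_pow, div_eq_mul_inv]

end Lagrange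

lemma abs_le_of_abs_sum_pow_mul_le {ι : Type*} [Fintype ι] [DecidableEq ι] {s : Finset ι}
    {x z : ι → ℝ} {η c : ℝ} {t : ℕ} (hη : 0 < η) (hx : ∀ i ∈ s, |x i| ≤ 1)
    (hsep : ∀ i ∈ s, ∀ j ∈ s, i ≠ j → η ≤ |x i - x j|) (hz : ∀ i ∉ s, z i = 0) (hst : #s ≤ t)
    (hc : ∀ j : Fin t, |∑ i, x i ^ (j : ℕ) * z i| ≤ c) {m : ι} (hm : m ∈ s) :
    |z m| ≤ (2 / η) ^ (#s - 1) * c := by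
  have hinj := Lagrange.injOn_of_le_abs_sub hη hsep
  set p := Lagrange.basis s x m
  have hdeg : p.natDegree < t := by
    rw [Lagrange.natDegree_basis hinj hm]
    have := card_pos.mpr ⟨m, hm⟩
    omega
  have hc0 : 0 ≤ c := (abs_nonneg _).trans (hc ⟨0, by omega⟩)
  calc |z m| = |∑ j : Fin t, p.coeff j * ∑ i, x i ^ (j : ℕ) * z i| := by
        rw [sum_coeff_mul_sum_pow_mul hdeg, Lagrange.sum_eval_basis_mul hinj hz hm]
    _ ≤ ∑ j : Fin t, ‖p.coeff j‖ * c := by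
        refine (abs_sum_le_sum_abs _ _).trans (sum_le_sum fun j _ ↦ ?_)
        rw [abs_mul, ← Real.norm_eq_abs]
        exact mul_le_mul_of_nonneg_left (hc j) (norm_nonneg _)
    _ = (p.sum fun _ a ↦ ‖a‖) * c := by
        rw [← sum_mul, sum_over_range' _ (fun _ ↦ norm_zero) t hdeg,
          Fin.sum_univ_eq_sum_range (fun j ↦ ‖p.coeff j‖)]
    _ ≤ (2 / η) ^ (#s - 1) * c := by
        gcongr; exact Lagrange.sum_norm_coeff_basis_le hη hx hsep hm

lemma le_abs_sub_of_consecutive_gap {k : ℕ} {x : Fin k → ℝ} {η : ℝ} (hx : Antitone x)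
    (hgap : ∀ i j : Fin k, (j : ℕ) = (i : ℕ) + 1 → η ≤ x i - x j) {i j : Fin k} (hij : i ≠ j) :
    η ≤ |x i - x j| := by
  wlog hlt : i < j generalizing i j
  · rw [abs_sub_comm]; exact this hij.symm (lt_of_le_of_ne (not_lt.mp hlt) hij.symm)
  have hsucc : (i : ℕ) + 1 < k := lt_of_le_of_lt hlt j.isLt
  calc η ≤ x i - x ⟨(i : ℕ) + 1, hsucc⟩ := hgap _ _ rfl
    _ ≤ x i - x j := sub_le_sub_left (hx (Fin.mk_le_of_le_val hlt)) _
    _ ≤ |x i - x j| := le_abs_self _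

theorem stmt17_general (k t : ℕ) (htk : t ≤ k) (lam : Fin k → ℝ)
    (hanti : StrictAnti lam) (h01 : ∀ i, lam i ∈ Set.Icc (0 : ℝ) 1)
    (η : ℝ) (hη : 0 < η)
    (hgap : ∀ i j : Fin k, (j : ℕ) = (i : ℕ) + 1 → η ≤ lam i - lam j)
    (ρ : ℝ) (z : Fin k → ℝ)
    (hsparse : (Finset.univ.filter fun i => z i ≠ 0).card ≤ t)
    (hz : ρ ≤ _root_.enorm z) :
    ρ / Real.sqrt k * (η / 2) ^ (t - 1) ≤
      _root_.enorm (fun j : Fin t => ∑ i : Fin k, lam i ^ (j : ℕ) * z i) := by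
  set E := _root_.enorm (fun j : Fin t => ∑ i : Fin k, lam i ^ (j : ℕ) * z i)
  have hE : 0 ≤ E := Real.sqrt_nonneg _
  obtain ⟨s, hsupp, hst⟩ := exists_superset_card_eq hsparse (by simpa using htk)
  have hzs : ∀ i ∉ s, z i = 0 := fun i hi ↦ by
    by_contra h; exact hi (hsupp (by simpa using h))
  have hzE : ∀ m, |z m| ≤ (2 / η) ^ (t - 1) * E := fun m ↦ by
    by_cases hm : m ∈ s
    · rw [← hst]
      refine abs_le_of_abs_sum_pow_mul_le hη (fun i _ ↦ abs_le.mpr ⟨?_, (h01 i).2⟩)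
        (fun i _ j _ hij ↦ le_abs_sub_of_consecutive_gap hanti.antitone hgap hij) hzs hst.le
        (abs_le_enorm _) hm
      linarith [(h01 i).1]
    · rw [hzs m hm, abs_zero]; positivity
  have hρE : ρ ≤ √k * ((2 / η) ^ (t - 1) * E) := by
    simpa using hz.trans (enorm_le_sqrt_card_mul (by positivity) hzE)
  calc ρ / √k * (η / 2) ^ (t - 1) ≤ (2 / η) ^ (t - 1) * E * (η / 2) ^ (t - 1) := by
        gcongr
        exact div_le_of_le_mul₀ (by positivity) (by positivity) (by linarith)
    _ = E := by
        rw [mul_right_comm, ← mul_pow, div_mul_div_comm, mul_comm 2 η, div_self (by positivity),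
          one_pow, one_mul]

/-- For the `k × t` Vandermonde matrix `V` on distinct nodes `λ₁ > ⋯ > λ_k` in `[0,1]`
with minimum consecutive gap `η`, and any `t`-sparse vector `z` with `‖z‖₂ ≥ ρ > 0`,
`‖Vᵀz‖₂ ≥ (ρ/√k)·(η/2)^{t-1}`. -/
theorem stmt17 (k t : ℕ) (ht : 1 ≤ t) (htk : t ≤ k) (lam : Fin k → ℝ)
    (hanti : StrictAnti lam) (h01 : ∀ i, lam i ∈ Set.Icc (0 : ℝ) 1)
    (η : ℝ) (hη : 0 < η)
    (hgap : ∀ i j : Fin k, (j : ℕ) = (i : ℕ) + 1 → η ≤ lam i - lam j)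
    (ρ : ℝ) (hρ : 0 < ρ) (z : Fin k → ℝ)
    (hsparse : (Finset.univ.filter fun i => z i ≠ 0).card ≤ t)
    (hz : ρ ≤ _root_.enorm z) :
    ρ / Real.sqrt k * (η / 2) ^ (t - 1) ≤
      _root_.enorm (fun j : Fin t => ∑ i : Fin k, lam i ^ (j : ℕ) * z i) :=
  stmt17_general k t htk lam hanti h01 η hη hgap ρ z hsparse hz
end
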